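/- arXiv:2204.09894 — 5 statements merged into one kernel-verified Lean document; each statement's English description precedes it below -/
import Mathlib

section
/- Let r, s ∈ ℝ. There exists a bounded function f : ℤ → ℤ such that c_r(n,m) − c_s(n,m) = f(n) + f(m) − f(n+m) for all n, m ∈ ℤ if and only if r − s ∈ ℤ. -/
/-- For `r, s ∈ ℝ`, the difference of the cocycles
`c_r(n,m) = ⌊rn⌋ + ⌊rm⌋ − ⌊r(n+m)⌋` and `c_s` is the coboundary of a bounded function
`f : ℤ → ℤ` if and only if `r − s` is an integer. -/
theorem floor_cocycles_cohomologous_iff (r s : ℝ) :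
    (∃ f : ℤ → ℤ, (∃ C : ℤ, ∀ n : ℤ, |f n| ≤ C) ∧
      ∀ n m : ℤ,
        (⌊r * n⌋ + ⌊r * m⌋ - ⌊r * (n + m)⌋) - (⌊s * n⌋ + ⌊s * m⌋ - ⌊s * (n + m)⌋)
          = f n + f m - f (n + m)) ↔
    ∃ k : ℤ, r - s = (k : ℝ) := by
  constructor
  · rintro ⟨f, ⟨C, hC⟩, hf⟩
    set h : ℤ → ℤ := fun n => f n - (⌊r * n⌋ - ⌊s * n⌋) with hh
    have hadd : ∀ n m : ℤ, h (n + m) = h n + h m := by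
      intro n m
      have := hf n m
      simp only [hh]
      push_cast
      omega
    let φ : ℤ →+ ℤ := AddMonoidHom.mk' h (fun n m => hadd n m)
    have hlin : ∀ n : ℤ, h n = n * h 1 := by
      intro n
      have := map_zsmul φ n (1 : ℤ)
      simpa [φ, AddMonoidHom.mk', smul_eq_mul] using this
    set a : ℤ := h 1 with ha
    have key : ∀ n : ℤ, |(r - s + a) * n| ≤ (C : ℝ) + 2 := by
      intro n
      have h2 : f n = n * a + ⌊r * n⌋ - ⌊s * n⌋ := by
        have := hlin n
        simp only [hh] at this
        omega
      have h1 : (f n : ℝ) = n * a + ⌊r * n⌋ - ⌊s * n⌋ := by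
        exact_mod_cast h2
      have hr1 : (⌊r * (n : ℤ)⌋ : ℝ) ≤ r * n := Int.floor_le _
      have hr2 : r * n - 1 < ⌊r * (n : ℤ)⌋ := Int.sub_one_lt_floor _
      have hs1 : (⌊s * (n : ℤ)⌋ : ℝ) ≤ s * n := Int.floor_le _
      have hs2 : s * n - 1 < ⌊s * (n : ℤ)⌋ := Int.sub_one_lt_floor _
      have hfb : |(f n : ℝ)| ≤ (C : ℝ) := by
        exact_mod_cast hC n
      have heq : (r - s + a) * n = (f n : ℝ) + (r * n - ⌊r * n⌋) - (s * n - ⌊s * n⌋) := by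
        rw [h1]; ring
      rw [heq]
      rw [abs_le] at hfb ⊢
      constructor <;> [linarith; linarith]
    have ht : r - s + a = 0 := by
      by_contra ht
      have habs : 0 < |r - s + (a : ℝ)| := abs_pos.mpr ht
      obtain ⟨n, hn⟩ := exists_nat_gt (((C : ℝ) + 2) / |r - s + (a : ℝ)|)
      have hb := key (n : ℤ)
      rw [abs_mul] at hb
      have h2 : ((C : ℝ) + 2) / |r - s + (a : ℝ)| * |r - s + (a : ℝ)|
          < (n : ℝ) * |r - s + (a : ℝ)| := by
        exact mul_lt_mul_of_pos_right hn habs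
      rw [div_mul_cancel₀ _ (ne_of_gt habs)] at h2
      have h3 : |((n : ℤ) : ℝ)| = (n : ℝ) := by
        simp
      rw [h3] at hb
      nlinarith
    exact ⟨-a, by push_cast; linarith⟩
  · rintro ⟨k, hk⟩
    refine ⟨fun _ => 0, ⟨0, fun n => by simp⟩, fun n m => ?_⟩
    have hr : ∀ n : ℤ, ⌊r * n⌋ = ⌊s * n⌋ + k * n := by
      intro n
      have : r * n = s * n + ((k * n : ℤ) : ℝ) := by
        push_cast
        have : r = s + k := by linarith
        rw [this]; ring
      rw [this, Int.floor_add_intCast]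
    have hr2 : ⌊r * ((n : ℝ) + m)⌋ = ⌊s * ((n : ℝ) + m)⌋ + k * (n + m) := by
      have := hr (n + m)
      push_cast at this
      exact_mod_cast this
    rw [hr n, hr m, hr2]
    ring
end

section
/- Let c : ℤ × ℤ → ℤ be a bounded 2-cocycle, i.e. c is bounded and c(m,k) − c(n+m,k) + c(n,m+k) − c(n,m) = 0 for all n, m, k ∈ ℤ. Then there exist a real number r and a bounded function f : ℤ → ℤ such that c(n,m) = c_r(n,m) + f(n) + f(m) − f(n+m) for all n, m ∈ ℤ. -/
/-- Every bounded 2-cocycle `c : ℤ × ℤ → ℤ` is, up to the coboundary of a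
bounded function `f : ℤ → ℤ`, equal to some `c_r(n,m) = ⌊rn⌋ + ⌊rm⌋ − ⌊r(n+m)⌋`. -/
theorem bounded_cocycle_cohomologous_to_floor_cocycle (c : ℤ → ℤ → ℤ)
    (hbdd : ∃ C : ℤ, ∀ n m : ℤ, |c n m| ≤ C)
    (hcoc : ∀ n m k : ℤ, c m k - c (n + m) k + c n (m + k) - c n m = 0) :
    ∃ (r : ℝ) (f : ℤ → ℤ), (∃ C : ℤ, ∀ n : ℤ, |f n| ≤ C) ∧
      ∀ n m : ℤ,
        c n m = (⌊r * n⌋ + ⌊r * m⌋ - ⌊r * (n + m)⌋) + f n + f m - f (n + m) := by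
  obtain ⟨C, hC⟩ := hbdd
  set g : ℤ → ℤ := fun n => c 0 0 -
      (((Finset.Ico (0:ℤ) n).sum (fun i => c i 1)) -
        ((Finset.Ico n (0:ℤ)).sum (fun i => c i 1))) with hg_def
  have hg1 : ∀ n : ℤ, g (n + 1) = g n - c n 1 := by
    intro n
    rcases le_or_gt 0 n with h | h
    · have h1 : Finset.Ico n (0:ℤ) = ∅ := Finset.Ico_eq_empty (by omega)
      have h2 : Finset.Ico (n+1) (0:ℤ) = ∅ := Finset.Ico_eq_empty (by omega)
      have hi : Finset.Ico (0:ℤ) (n+1) = insert n (Finset.Ico (0:ℤ) n) := by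
        ext x; simp; omega
      have hnotmem : n ∉ Finset.Ico (0:ℤ) n := by simp
      have h3 : (Finset.Ico (0:ℤ) (n+1)).sum (fun i => c i 1)
          = c n 1 + (Finset.Ico (0:ℤ) n).sum (fun i => c i 1) := by
        rw [hi, Finset.sum_insert hnotmem]
      simp only [hg_def, h1, h2, h3, Finset.sum_empty]
      ring
    · have h1 : Finset.Ico (0:ℤ) n = ∅ := Finset.Ico_eq_empty (by omega)
      have h2 : Finset.Ico (0:ℤ) (n+1) = ∅ := Finset.Ico_eq_empty (by omega)
      have hi : Finset.Ico n (0:ℤ) = insert n (Finset.Ico (n+1) (0:ℤ)) := by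
        ext x; simp; omega
      have hnotmem : n ∉ Finset.Ico (n+1) (0:ℤ) := by simp
      have h3 : (Finset.Ico n (0:ℤ)).sum (fun i => c i 1)
          = c n 1 + (Finset.Ico (n+1) (0:ℤ)).sum (fun i => c i 1) := by
        rw [hi, Finset.sum_insert hnotmem]
      simp only [hg_def, h1, h2, h3, Finset.sum_empty]
      ring
  have hg0 : g 0 = c 0 0 := by simp [hg_def]
  have hδ : ∀ n m : ℤ, c n m = g n + g m - g (n + m) := by
    intro n m
    induction m using Int.induction_on with
    | zero =>
      have h := hcoc n 0 0
      simp only [add_zero, zero_add] at h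
      simp only [add_zero, hg0]
      omega
    | succ m ih =>
      have h := hcoc n m 1
      have h1 := hg1 (n + m)
      have h2 := hg1 m
      have e4 : n + (↑m + 1) = n + ↑m + 1 := by ring
      have e5 : g (n + (↑m + 1)) = g (n + ↑m + 1) := congrArg g e4
      omega
    | pred m ih =>
      have h := hcoc n (-↑m - 1) 1
      have h1 := hg1 (n + (-↑m - 1))
      have h2 := hg1 (-↑m - 1)
      have e1 : (-↑m - 1 : ℤ) + 1 = -↑m := by ring
      have e2 : n + (-↑m - 1) + 1 = n + -↑m := by ring
      rw [e1] at h2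
      rw [e2] at h1
      rw [e1] at h
      omega
  have hC0 : 0 ≤ C := le_trans (abs_nonneg _) (hC 0 0)
  have hg0b : |g 0| ≤ C := by rw [hg0]; exact hC 0 0
  have hA : ∀ (p : ℕ) (n : ℤ), |g ((p:ℤ) * n) - (p:ℤ) * g n| ≤ |g 0| + (p:ℤ) * C := by
    intro p n
    induction p with
    | zero => simp
    | succ p ih =>
      have hd := hδ ((p:ℤ)*n) n
      have hc := abs_le.mp (hC ((p:ℤ)*n) n)
      have ih' := abs_le.mp ih
      have e5 : g ((((p:ℤ)+1)) * n) = g ((p:ℤ)*n + n) := congrArg g (by ring)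
      have e6 : ((p:ℤ)+1) * g n = (p:ℤ) * g n + g n := by ring
      have e7 : ((p:ℤ)+1) * C = (p:ℤ) * C + C := by ring
      rw [abs_le]
      push_cast
      rw [e5]
      constructor <;> linarith [abs_nonneg (g 0)]
  -- integer-level quasimorphism estimates with arbitrary positive multiplier
  have hAZ : ∀ P Q : ℤ, 0 ≤ Q → |g (Q * P) - Q * g P| ≤ |g 0| + Q * C := by
    intro P Q hQ
    obtain ⟨q, rfl⟩ : ∃ q : ℕ, Q = (q : ℤ) := ⟨Q.toNat, (Int.toNat_of_nonneg hQ).symm⟩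
    exact hA q P
  have hB : ∀ P Q : ℤ, 0 ≤ P → 0 ≤ Q →
      |Q * g P - P * g Q| ≤ 2 * |g 0| + (P + Q) * C := by
    intro P Q hP hQ
    have t1 := abs_le.mp (hAZ P Q hQ)
    have t2 := abs_le.mp (hAZ Q P hP)
    have e : g (Q * P) = g (P * Q) := congrArg g (mul_comm Q P)
    have e7 : (P + Q) * C = P * C + Q * C := by ring
    rw [abs_le]
    constructor <;> linarith
  -- pass to the reals
  obtain ⟨A, hA_def⟩ : ∃ A : ℝ, A = ((|g 0| : ℤ) : ℝ) := ⟨_, rfl⟩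
  obtain ⟨Cr, hCr_def⟩ : ∃ Cr : ℝ, Cr = ((C : ℤ) : ℝ) := ⟨_, rfl⟩
  have hA0 : 0 ≤ A := by rw [hA_def]; positivity
  have hACr : A ≤ Cr := by rw [hA_def, hCr_def]; exact_mod_cast hg0b
  have hCr0 : 0 ≤ Cr := by rw [hCr_def]; exact_mod_cast hC0
  set u : ℕ → ℝ := fun p => (g ((p : ℤ) + 1) : ℝ) / ((p : ℝ) + 1) with hu_def
  have hcauchy : CauchySeq u := by
    apply cauchySeq_of_le_tendsto_0 (fun N : ℕ => (2 * A + 2 * Cr) / ((N : ℝ) + 1))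
    · intro p q N hp hq
      rw [Real.dist_eq]
      have hP1 : (N : ℝ) + 1 ≤ (p : ℝ) + 1 := by exact_mod_cast by omega
      have hQ1 : (N : ℝ) + 1 ≤ (q : ℝ) + 1 := by exact_mod_cast by omega
      have hN1 : (0 : ℝ) < (N : ℝ) + 1 := by positivity
      have hPpos : (0 : ℝ) < (p : ℝ) + 1 := by positivity
      have hQpos : (0 : ℝ) < (q : ℝ) + 1 := by positivity
      have key := hB ((p : ℤ) + 1) ((q : ℤ) + 1) (by omega) (by omega)
      have keyR : |((q : ℝ) + 1) * (g ((p : ℤ) + 1) : ℝ) -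
          ((p : ℝ) + 1) * (g ((q : ℤ) + 1) : ℝ)| ≤ 2 * A + (((p : ℝ) + 1) + ((q : ℝ) + 1)) * Cr := by
        rw [hA_def, hCr_def]
        exact_mod_cast key
      have e : u p - u q = (((q : ℝ) + 1) * (g ((p : ℤ) + 1) : ℝ) -
          ((p : ℝ) + 1) * (g ((q : ℤ) + 1) : ℝ)) / (((p : ℝ) + 1) * ((q : ℝ) + 1)) := by
        rw [hu_def]
        field_simp
      rw [e, abs_div,
        abs_of_pos (show (0:ℝ) < ((p : ℝ) + 1) * ((q : ℝ) + 1) by positivity)]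
      calc |((q : ℝ) + 1) * (g ((p : ℤ) + 1) : ℝ) - ((p : ℝ) + 1) * (g ((q : ℤ) + 1) : ℝ)| /
              (((p : ℝ) + 1) * ((q : ℝ) + 1))
          ≤ (2 * A + (((p : ℝ) + 1) + ((q : ℝ) + 1)) * Cr) / (((p : ℝ) + 1) * ((q : ℝ) + 1)) := by
            gcongr
        _ = 2 * A / (((p : ℝ) + 1) * ((q : ℝ) + 1)) + Cr / ((q : ℝ) + 1) + Cr / ((p : ℝ) + 1) := by
            field_simp
            ring
        _ ≤ 2 * A / (((N : ℝ) + 1) * 1) + Cr / ((N : ℝ) + 1) + Cr / ((N : ℝ) + 1) := by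
            gcongr <;> nlinarith
        _ = (2 * A + 2 * Cr) / ((N : ℝ) + 1) := by
            field_simp
            ring
    · have h0 : Filter.Tendsto (fun N : ℕ => (2 * A + 2 * Cr) * (1 / ((N : ℝ) + 1)))
          Filter.atTop (nhds ((2 * A + 2 * Cr) * 0)) :=
        tendsto_one_div_add_atTop_nhds_zero_nat.const_mul _
      simpa [div_eq_mul_inv] using h0
  obtain ⟨r, hr⟩ := cauchySeq_tendsto_of_complete hcauchy
  -- main estimate: |r*n - g n| ≤ Cr for n ≥ 1
  have hrn : ∀ n : ℤ, 1 ≤ n → |r * (n : ℝ) - (g n : ℝ)| ≤ Cr := by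
    intro n hn
    set v : ℕ → ℝ := fun p => (g (((p : ℤ) + 1) * n) : ℝ) / ((p : ℝ) + 1) with hv_def
    set k : ℕ → ℕ := fun p => (p + 1) * n.toNat - 1 with hk_def
    have hnt : 1 ≤ n.toNat := by omega
    have hk1 : ∀ p : ℕ, k p + 1 = (p + 1) * n.toNat := by
      intro p
      have : 1 ≤ (p + 1) * n.toNat := Nat.one_le_iff_ne_zero.mpr (by positivity)
      simp only [hk_def]
      omega
    have he : ∀ p : ℕ, ((k p : ℤ)) + 1 = ((p : ℤ) + 1) * n := by
      intro p
      have h1 := hk1 p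
      have : (((k p + 1 : ℕ)) : ℤ) = (((p + 1) * n.toNat : ℕ) : ℤ) := by exact_mod_cast h1
      push_cast [Int.toNat_of_nonneg (by omega : (0:ℤ) ≤ n)] at this
      linarith
    have heR : ∀ p : ℕ, ((k p : ℝ)) + 1 = ((p : ℝ) + 1) * (n : ℝ) := by
      intro p
      exact_mod_cast congrArg (fun z : ℤ => (z : ℝ)) (he p)
    have hnR : (1 : ℝ) ≤ (n : ℝ) := by exact_mod_cast hn
    have hv : ∀ p : ℕ, v p = (n : ℝ) * u (k p) := by
      intro p
      have harg : g ((k p : ℤ) + 1) = g (((p : ℤ) + 1) * n) := congrArg g (he p)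
      simp only [hv_def, hu_def, harg, heR]
      have hp1 : (0:ℝ) < (p : ℝ) + 1 := by positivity
      field_simp
    have hk_tendsto : Filter.Tendsto k Filter.atTop Filter.atTop := by
      apply Filter.tendsto_atTop_mono (f := fun p : ℕ => p) _ Filter.tendsto_id
      intro p
      have h1 := hk1 p
      have : p + 1 ≤ (p + 1) * n.toNat := Nat.le_mul_of_pos_right _ (by omega)
      show p ≤ k p
      omega
    have hvlim : Filter.Tendsto v Filter.atTop (nhds ((n : ℝ) * r)) := by
      have := (tendsto_const_nhds (x := (n : ℝ))).mul (hr.comp hk_tendsto)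
      exact this.congr (fun p => (hv p).symm)
    have hpoint : ∀ p : ℕ, |v p - (g n : ℝ)| ≤ A / ((p : ℝ) + 1) + Cr := by
      intro p
      have key := hAZ n ((p : ℤ) + 1) (by omega)
      have keyR : |(g (((p : ℤ) + 1) * n) : ℝ) - ((p : ℝ) + 1) * (g n : ℝ)| ≤
          A + ((p : ℝ) + 1) * Cr := by
        rw [hA_def, hCr_def]
        exact_mod_cast key
      have hp1 : (0:ℝ) < (p : ℝ) + 1 := by positivity
      have e : v p - (g n : ℝ) = ((g (((p : ℤ) + 1) * n) : ℝ) - ((p : ℝ) + 1) * (g n : ℝ)) /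
          ((p : ℝ) + 1) := by
        simp only [hv_def]
        field_simp
      rw [e, abs_div, abs_of_pos hp1, div_le_iff₀ hp1]
      calc |(g (((p : ℤ) + 1) * n) : ℝ) - ((p : ℝ) + 1) * (g n : ℝ)|
          ≤ A + ((p : ℝ) + 1) * Cr := keyR
        _ = (A / ((p : ℝ) + 1) + Cr) * ((p : ℝ) + 1) := by field_simp
    have hL : Filter.Tendsto (fun p => |v p - (g n : ℝ)|) Filter.atTop
        (nhds (|(n : ℝ) * r - (g n : ℝ)|)) := (hvlim.sub tendsto_const_nhds).abs
    have hR : Filter.Tendsto (fun p : ℕ => A / ((p : ℝ) + 1) + Cr) Filter.atTop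
        (nhds (A * 0 + Cr)) := by
      have h0 : Filter.Tendsto (fun p : ℕ => A * (1 / ((p : ℝ) + 1))) Filter.atTop
          (nhds (A * 0)) := tendsto_one_div_add_atTop_nhds_zero_nat.const_mul _
      simpa [div_eq_mul_inv] using h0.add_const Cr
    have := le_of_tendsto_of_tendsto' hL hR hpoint
    rw [show (n : ℝ) * r = r * (n : ℝ) by ring] at this
    linarith
  -- uniform estimate for all n
  have hall : ∀ n : ℤ, |(g n : ℝ) - r * (n : ℝ)| ≤ 3 * Cr := by
    intro n
    rcases lt_trichotomy n 0 with h | h | h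
    · have hd := hδ n (-n)
      have e0 : n + -n = 0 := by ring
      rw [e0] at hd
      have hdR : (c n (-n) : ℝ) = (g n : ℝ) + (g (-n) : ℝ) - (g 0 : ℝ) := by exact_mod_cast hd
      have h1 := abs_le.mp (hrn (-n) (by omega))
      have hcR : |(c n (-n) : ℝ)| ≤ Cr := by rw [hCr_def]; exact_mod_cast hC n (-n)
      have hcR' := abs_le.mp hcR
      have hg0R : |(g 0 : ℝ)| ≤ Cr := by
        rw [hCr_def]
        exact_mod_cast hg0b
      have hg0R' := abs_le.mp hg0R
      have hneg : ((-n : ℤ) : ℝ) = -(n : ℝ) := by push_cast; ring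
      rw [hneg] at h1
      rw [abs_le]
      constructor <;> linarith [neg_abs_le (g 0 : ℝ), le_abs_self (g 0 : ℝ)]
    · subst h
      simp only [Int.cast_zero, mul_zero, sub_zero]
      calc |(g 0 : ℝ)| ≤ Cr := by rw [hCr_def]; exact_mod_cast hg0b
        _ ≤ 3 * Cr := by linarith
    · have h1 := abs_le.mp (hrn n (by omega))
      rw [abs_le]
      constructor <;> linarith
  -- assemble the answer
  refine ⟨r, fun n => g n - ⌊r * (n : ℝ)⌋, ⟨3 * C + 1, ?_⟩, ?_⟩
  · intro n
    have h1 := abs_le.mp (hall n)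
    have hf1 : (⌊r * (n : ℝ)⌋ : ℝ) ≤ r * (n : ℝ) := Int.floor_le _
    have hf2 : r * (n : ℝ) < (⌊r * (n : ℝ)⌋ : ℝ) + 1 := Int.lt_floor_add_one _
    have : |(g n : ℝ) - (⌊r * (n : ℝ)⌋ : ℝ)| ≤ 3 * Cr + 1 := by
      rw [abs_le]
      constructor <;> linarith
    rw [hCr_def] at this
    exact_mod_cast this
  · intro n m
    have hd := hδ n m
    push_cast
    linarith [hd]
end

section
/- Let 0 → A →ⁱ Γ →ᵖ G → 1 be a central A-extension of a group G, τ : Γ → A a connection cochain, and σ : G × G → A the unique function with σ(p(γ₁), p(γ₂)) = τ(γ₁) + τ(γ₂) − τ(γ₁γ₂) for all γ₁, γ₂ ∈ Γ. Let s : G → Γ be any section of p (p ∘ s = id) and let χ : G × G → A be the cocycle defined by i(χ(g₁,g₂)) = s(g₁g₂)⁻¹s(g₁)s(g₂). Then χ + σ is a coboundary: there exists β : G → A such that χ(g₁,g₂) + σ(g₁,g₂) = β(g₁) + β(g₂) − β(g₁g₂) for all g₁, g₂ ∈ G. (Equivalently, the Euler class e(Γ) = [χ] equals [−σ].) -/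
/-- Given a central `A`-extension `0 → A →ⁱ Γ →ᵖ G → 1`, a connection cochain
`τ : Γ → A` with induced cocycle `σ`, a section `s` of `p` and its Euler cocycle `χ`
(defined by `i (χ g₁ g₂) = s (g₁ g₂)⁻¹ * s g₁ * s g₂`), the cocycle `χ + σ` is a
coboundary; equivalently the Euler class `[χ]` equals `[−σ]`. -/
theorem euler_class_equals_minus_connection_cocycle
    {A Γ G : Type*} [AddCommGroup A] [Group Γ] [Group G]
    (i : A → Γ) (p : Γ →* G)
    (hi_inj : Function.Injective i)
    (hi_hom : ∀ a b : A, i (a + b) = i a * i b)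
    (hp_surj : Function.Surjective p)
    (hker : ∀ γ : Γ, p γ = 1 ↔ γ ∈ Set.range i)
    (hcent : ∀ (a : A) (γ : Γ), i a * γ = γ * i a)
    (τ : Γ → A)
    (hτ : ∀ (γ : Γ) (a : A), τ (γ * i a) = τ γ + a)
    (σ : G → G → A)
    (hσ : ∀ γ₁ γ₂ : Γ, σ (p γ₁) (p γ₂) = τ γ₁ + τ γ₂ - τ (γ₁ * γ₂))
    (s : G → Γ)
    (hs : ∀ g : G, p (s g) = g)
    (χ : G → G → A)
    (hχ : ∀ g₁ g₂ : G, i (χ g₁ g₂) = (s (g₁ * g₂))⁻¹ * s g₁ * s g₂) :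
    ∃ β : G → A, ∀ g₁ g₂ : G,
      χ g₁ g₂ + σ g₁ g₂ = β g₁ + β g₂ - β (g₁ * g₂) := by
  refine ⟨fun g => τ (s g), fun g₁ g₂ => ?_⟩
  have h1 : s g₁ * s g₂ = s (g₁ * g₂) * i (χ g₁ g₂) := by
    rw [hχ]; group
  have h2 := hσ (s g₁) (s g₂)
  rw [hs, hs, h1, hτ] at h2
  rw [h2]; abel
end

section
/- Let G be a uniformly perfect group and let 0 → ℤ →ⁱ Γ →ᵖ G → 1 be a central ℤ-extension of G. If τ₁, τ₂ : Γ → ℝ are both homogeneous quasi-morphisms and both ℝ-valued connection cochains, then τ₁ = τ₂. -/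
private lemma zero_of_nat_mul_le {d C : ℝ} (h : ∀ n : ℕ, (n : ℝ) * |d| ≤ C) : d = 0 := by
  by_contra hd
  have hd' : 0 < |d| := abs_pos.mpr hd
  obtain ⟨n, hn⟩ := exists_nat_gt (C / |d|)
  have h2 : (n : ℝ) ≤ C / |d| := (le_div_iff₀ hd').mpr (h n)
  linarith

section QM
variable {Γ : Type*} [Group Γ] (f : Γ → ℝ) (D : ℝ)
  (hqm : ∀ γ γ' : Γ, |f γ + f γ' - f (γ * γ')| ≤ D)
  (hhom : ∀ (γ : Γ) (n : ℤ), f (γ ^ n) = (n : ℝ) * f γ)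

include hhom in
private lemma qm_one : f 1 = 0 := by
  have := hhom 1 0
  simpa using this

include hqm hhom in
private lemma qm_D_nonneg : 0 ≤ D := by
  have h := hqm 1 1
  rw [mul_one, qm_one f hhom] at h
  simpa using h

include hhom in
private lemma qm_inv (γ : Γ) : f γ⁻¹ = -(f γ) := by
  have := hhom γ (-1)
  simpa using this

include hqm hhom in
private lemma qm_conj (g x : Γ) : f (g * x * g⁻¹) = f x := by
  have key : ∀ n : ℕ, (n : ℝ) * |f (g * x * g⁻¹) - f x| ≤ 2 * D := by
    intro n
    have hp : (g * x * g⁻¹) ^ (n : ℤ) = g * x ^ (n : ℤ) * g⁻¹ := conj_zpow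
    have h1 := hqm g (x ^ (n : ℤ) * g⁻¹)
    have h2 := hqm (x ^ (n : ℤ)) g⁻¹
    rw [← mul_assoc, ← hp, hhom (g * x * g⁻¹) n] at h1
    rw [hhom x n, qm_inv f hhom g] at h2
    push_cast at h1 h2
    rw [← abs_of_nonneg (n.cast_nonneg : (0:ℝ) ≤ (n:ℝ)), ← abs_mul]
    have heq : (n : ℝ) * (f (g * x * g⁻¹) - f x)
        = -((f g + f (x ^ (n:ℤ) * g⁻¹) - (n : ℝ) * f (g * x * g⁻¹))
          + ((n : ℝ) * f x + -(f g) - f (x ^ (n:ℤ) * g⁻¹))) := by ring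
    rw [heq, abs_neg]
    calc _ ≤ |f g + f (x ^ (n:ℤ) * g⁻¹) - (n : ℝ) * f (g * x * g⁻¹)|
          + |(n : ℝ) * f x + -(f g) - f (x ^ (n:ℤ) * g⁻¹)| := abs_add_le _ _
      _ ≤ 2 * D := by linarith
  have := zero_of_nat_mul_le key
  linarith [this]

include hqm hhom in
private lemma qm_comm (a b : Γ) : |f (a * b * a⁻¹ * b⁻¹)| ≤ D := by
  have h := hqm (a * b * a⁻¹) b⁻¹
  rw [qm_conj f D hqm hhom a b, qm_inv f hhom b] at h
  have heq : f b + -(f b) - f (a * b * a⁻¹ * b⁻¹) = -(f (a * b * a⁻¹ * b⁻¹)) := by ring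
  rw [heq, abs_neg] at h
  exact h

include hqm hhom in
private lemma qm_list_prod (L : List Γ) (h : ∀ x ∈ L, |f x| ≤ D) :
    |f L.prod| ≤ 2 * L.length * D := by
  induction L with
  | nil => simp [qm_one f hhom]
  | cons x L ih =>
    have hx := h x (List.mem_cons_self)
    have hL := ih (fun y hy => h y (List.mem_cons_of_mem x hy))
    have hq := hqm x L.prod
    have : |f (x :: L).prod| ≤ |f x| + |f L.prod| + D := by
      rw [List.prod_cons]
      calc |f (x * L.prod)| = |(f x + f L.prod) - (f x + f L.prod - f (x * L.prod))| := by
            ring_nf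
        _ ≤ |f x + f L.prod| + |f x + f L.prod - f (x * L.prod)| := abs_sub _ _
        _ ≤ (|f x| + |f L.prod|) + D := by
            have := abs_add_le (f x) (f L.prod); linarith
        _ = |f x| + |f L.prod| + D := by ring
    simp only [List.length_cons]
    push_cast
    linarith

end QM


/-- A group `G` is uniformly perfect if there is `k : ℕ` such that every element of `G`
is a product of at most `k` commutators (equivalently, of exactly `k` commutators,
padding with trivial commutators). -/
def UniformlyPerfect (G : Type*) [Group G] : Prop :=
  ∃ k : ℕ, ∀ g : G, ∃ a b : Fin k → G,
    g = (List.ofFn fun j => a j * b j * (a j)⁻¹ * (b j)⁻¹).prod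

/-- For a central `ℤ`-extension `0 → ℤ →ⁱ Γ →ᵖ G → 1` of a uniformly perfect
group `G`, there is at most one function `Γ → ℝ` which is simultaneously a homogeneous
quasi-morphism and an `ℝ`-valued connection cochain. -/
theorem homogeneous_connection_quasimorphism_unique
    {Γ G : Type*} [Group Γ] [Group G]
    (hG : UniformlyPerfect G)
    (i : ℤ → Γ) (p : Γ →* G)
    (hi_inj : Function.Injective i)
    (hi_hom : ∀ a b : ℤ, i (a + b) = i a * i b)
    (hp_surj : Function.Surjective p)
    (hker : ∀ γ : Γ, p γ = 1 ↔ γ ∈ Set.range i)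
    (hcent : ∀ (a : ℤ) (γ : Γ), i a * γ = γ * i a)
    (τ₁ τ₂ : Γ → ℝ)
    (hqm₁ : ∃ D : ℝ, ∀ γ γ' : Γ, |τ₁ γ + τ₁ γ' - τ₁ (γ * γ')| ≤ D)
    (hqm₂ : ∃ D : ℝ, ∀ γ γ' : Γ, |τ₂ γ + τ₂ γ' - τ₂ (γ * γ')| ≤ D)
    (hhom₁ : ∀ (γ : Γ) (n : ℤ), τ₁ (γ ^ n) = (n : ℝ) * τ₁ γ)
    (hhom₂ : ∀ (γ : Γ) (n : ℤ), τ₂ (γ ^ n) = (n : ℝ) * τ₂ γ)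
    (hconn₁ : ∀ (γ : Γ) (n : ℤ), τ₁ (γ * i n) = τ₁ γ + n)
    (hconn₂ : ∀ (γ : Γ) (n : ℤ), τ₂ (γ * i n) = τ₂ γ + n) :
    τ₁ = τ₂ := by
  obtain ⟨k, hk⟩ := hG
  obtain ⟨D₁, hqm₁⟩ := hqm₁
  obtain ⟨D₂, hqm₂⟩ := hqm₂
  set f : Γ → ℝ := fun γ => τ₁ γ - τ₂ γ with hf
  set D : ℝ := D₁ + D₂ with hD
  have hfqm : ∀ γ γ' : Γ, |f γ + f γ' - f (γ * γ')| ≤ D := by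
    intro γ γ'
    have h1 := hqm₁ γ γ'
    have h2 := hqm₂ γ γ'
    have : f γ + f γ' - f (γ * γ')
        = (τ₁ γ + τ₁ γ' - τ₁ (γ * γ')) - (τ₂ γ + τ₂ γ' - τ₂ (γ * γ')) := by
      simp [hf]; ring
    rw [this]
    calc _ ≤ |τ₁ γ + τ₁ γ' - τ₁ (γ * γ')| + |τ₂ γ + τ₂ γ' - τ₂ (γ * γ')| := abs_sub _ _
      _ ≤ D := by rw [hD]; linarith
  have hfhom : ∀ (γ : Γ) (n : ℤ), f (γ ^ n) = (n : ℝ) * f γ := by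
    intro γ n
    simp only [hf, hhom₁, hhom₂]; ring
  have hfinv : ∀ (γ : Γ) (n : ℤ), f (γ * i n) = f γ := by
    intro γ n
    simp only [hf, hconn₁, hconn₂]; ring
  have hDnn : 0 ≤ D := qm_D_nonneg f D hfqm hfhom
  -- boundedness of f
  have hbound : ∀ γ : Γ, |f γ| ≤ 2 * k * D := by
    intro γ
    obtain ⟨a, b, hab⟩ := hk (p γ)
    set A : Fin k → Γ := fun j => Function.surjInv hp_surj (a j) with hA
    set B : Fin k → Γ := fun j => Function.surjInv hp_surj (b j) with hB
    set L : List Γ := List.ofFn (fun j => A j * B j * (A j)⁻¹ * (B j)⁻¹) with hL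
    have hpA : ∀ j, p (A j) = a j := fun j => Function.surjInv_eq hp_surj (a j)
    have hpB : ∀ j, p (B j) = b j := fun j => Function.surjInv_eq hp_surj (b j)
    have hpL : p L.prod = p γ := by
      rw [map_list_prod, hL, List.map_ofFn, hab]
      congr 1
      exact congrArg _ (funext fun j => by simp [Function.comp, hpA, hpB])
    have hker' : p (γ * (L.prod)⁻¹) = 1 := by
      rw [map_mul, map_inv, hpL, mul_inv_cancel]
    obtain ⟨n, hn⟩ := (hker _).mp hker'
    have hγ : γ = L.prod * i n := by
      rw [← hcent]
      rw [hn]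
      group
    have hlen : L.length = k := by rw [hL, List.length_ofFn]
    have hmem : ∀ x ∈ L, |f x| ≤ D := by
      intro x hx
      rw [hL, List.mem_ofFn] at hx
      obtain ⟨j, hj⟩ := hx
      rw [← hj]
      exact qm_comm f D hfqm hfhom (A j) (B j)
    have := qm_list_prod f D hfqm hfhom L hmem
    rw [hlen] at this
    rw [hγ, hfinv]
    exact this
  have hzero : ∀ γ : Γ, f γ = 0 := by
    intro γ
    apply zero_of_nat_mul_le (C := 2 * k * D)
    intro n
    have h1 := hbound (γ ^ (n : ℤ))
    rw [hfhom γ n] at h1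
    rw [abs_mul] at h1
    rw [abs_of_nonneg (by positivity : (0:ℝ) ≤ ((n:ℤ):ℝ))] at h1
    push_cast at h1 ⊢
    exact h1
  funext γ
  have := hzero γ
  simp only [hf] at this
  linarith
end

section
/- Let 0 → ℤ →ⁱ Γ →ᵖ G → 1 be a central ℤ-extension of a group G and let τ : Γ → ℝ be a homogeneous quasi-morphism which is also an ℝ-valued connection cochain. Let σ : G × G → ℤ be the unique 2-cocycle with σ(p(γ₁), p(γ₂)) = ⌊τ(γ₁)⌋ + ⌊τ(γ₂)⌋ − ⌊τ(γ₁γ₂)⌋ for all γ₁, γ₂ ∈ Γ. Then for every g ∈ G, every lift γ ∈ p⁻¹(g), and all integers k, ℓ: σ(gᵏ, gˡ) = c_r(k, ℓ), where r = τ(γ) and c_r(k,ℓ) = ⌊rk⌋ + ⌊rℓ⌋ − ⌊r(k+ℓ)⌋. (This is the cocycle-level content of the main theorem: the pullback of the bounded Euler class under k ↦ gᵏ is represented by −c_r with r = τ(γ).) -/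
/-- Let `0 → ℤ →ⁱ Γ →ᵖ G → 1` be a central `ℤ`-extension and `τ : Γ → ℝ`
a homogeneous quasi-morphism which is also an `ℝ`-valued connection cochain. Let
`σ : G × G → ℤ` be the 2-cocycle with `σ (p γ₁) (p γ₂) = ⌊τ γ₁⌋ + ⌊τ γ₂⌋ − ⌊τ (γ₁ γ₂)⌋`.
Then for every `g ∈ G`, every lift `γ ∈ p⁻¹(g)` and all integers `k, ℓ`,
`σ (gᵏ) (gˡ) = c_r (k, ℓ)` where `r = τ γ` and `c_r (k,ℓ) = ⌊rk⌋ + ⌊rℓ⌋ − ⌊r(k+ℓ)⌋`. -/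
theorem pullback_bounded_euler_cocycle_eq_rotation_cocycle
    {Γ G : Type*} [Group Γ] [Group G]
    (i : ℤ → Γ) (p : Γ →* G)
    (hi_inj : Function.Injective i)
    (hi_hom : ∀ a b : ℤ, i (a + b) = i a * i b)
    (hp_surj : Function.Surjective p)
    (hker : ∀ γ : Γ, p γ = 1 ↔ γ ∈ Set.range i)
    (hcent : ∀ (a : ℤ) (γ : Γ), i a * γ = γ * i a)
    (τ : Γ → ℝ)
    (hqm : ∃ D : ℝ, ∀ γ γ' : Γ, |τ γ + τ γ' - τ (γ * γ')| ≤ D)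
    (hhom : ∀ (γ : Γ) (n : ℤ), τ (γ ^ n) = (n : ℝ) * τ γ)
    (hconn : ∀ (γ : Γ) (n : ℤ), τ (γ * i n) = τ γ + n)
    (σ : G → G → ℤ)
    (hσ : ∀ γ₁ γ₂ : Γ, σ (p γ₁) (p γ₂) = ⌊τ γ₁⌋ + ⌊τ γ₂⌋ - ⌊τ (γ₁ * γ₂)⌋) :
    ∀ (g : G) (γ : Γ), p γ = g → ∀ k ℓ : ℤ,
      σ (g ^ k) (g ^ ℓ) = ⌊τ γ * k⌋ + ⌊τ γ * ℓ⌋ - ⌊τ γ * (k + ℓ)⌋ := by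
  intro g γ hpγ k ℓ
  have h := hσ (γ ^ k) (γ ^ ℓ)
  rw [map_zpow, map_zpow, hpγ, ← zpow_add, hhom, hhom, hhom] at h
  rw [h]
  push_cast
  ring_nf
end
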